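/- arXiv:2504.17363 — 4 statements merged into one kernel-verified Lean document; each statement's English description precedes it below -/
import Mathlib

section
/- Let X be a random element of a metric space E such that v(T) P(T^{-1} X ∈ ·) → μ(·) in M(E \ F) as T → ∞, where v is regularly varying with index α > 0 and F is a closed cone. Then the limit measure μ is (−α)-homogeneous: μ(uA) = u^{-α} μ(A) for every u > 0 and every Borel set A ⊂ E \ F bounded away from F. -/
/-!
Write `ν_T = v(T) P(T⁻¹X ∈ ·)`. The image of `ν_T` under `x ↦ w⁻¹x` is `(v(T)/v(wT)) ν_{wT}` and
`v(wT)/v(T) → w^α`, so in the limit `∫ f(w⁻¹x) μ(dx) = w^{-α} ∫ f dμ` for every bounded continuous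
`f` vanishing near `F`; for `w ≥ 1` the map `x ↦ w⁻¹x` does not increase the distance to `F`, so
`f(w⁻¹ ·)` is again such a function. The image of `μ` under `x ↦ w⁻¹x` and `w^{-α} μ` are both
finite off every neighbourhood of `F`, and such measures are determined on sets bounded away from
`F` by these integrals. Hence `μ(wA) = w^{-α} μ(A)` for `w ≥ 1`, first for `A` bounded away from
`F` and then, by exhaustion, for every Borel `A ⊆ E \ F`; the case `u < 1` is the case `u⁻¹ > 1`
applied to the set `uA`.
-/

open MeasureTheory Filter Set Topology

/-- Convergence in `M(E \ F)`: integrals of bounded continuous functions vanishing on a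
neighborhood `F^r` of `F` converge. -/
def MConvergesTo {E : Type*} [MetricSpace E] [MeasurableSpace E]
    (ν : ℝ → Measure E) (μ : Measure E) (F : Set E) : Prop :=
  ∀ f : E → ℝ, Continuous f → (∃ C, ∀ x, |f x| ≤ C) →
    (∃ r > 0, ∀ x ∈ Metric.thickening r F, f x = 0) →
    Tendsto (fun T => ∫ x, f x ∂(ν T)) atTop (𝓝 (∫ x, f x ∂μ))

open Metric
open scoped ENNReal NNReal

structure IsScaling {E : Type*} (scale : ℝ → E → E) : Prop where
  one_apply : ∀ y, scale 1 y = y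
  apply_apply : ∀ a b : ℝ, 0 < a → 0 < b → ∀ y, scale a (scale b y) = scale (a * b) y

namespace IsScaling

variable {E : Type*} {scale : ℝ → E → E}

theorem inv_apply_apply (hs : IsScaling scale) {w : ℝ} (hw : 0 < w) (y : E) :
    scale w⁻¹ (scale w y) = y := by
  rw [hs.apply_apply _ _ (inv_pos.2 hw) hw, inv_mul_cancel₀ hw.ne', hs.one_apply]

theorem apply_inv_apply (hs : IsScaling scale) {w : ℝ} (hw : 0 < w) (y : E) :
    scale w (scale w⁻¹ y) = y := by
  simpa using hs.inv_apply_apply (inv_pos.2 hw) y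

theorem image_eq_preimage (hs : IsScaling scale) {w : ℝ} (hw : 0 < w) (S : Set E) :
    scale w '' S = scale w⁻¹ ⁻¹' S :=
  congrFun (image_eq_preimage_of_inverse (hs.inv_apply_apply hw) (hs.apply_inv_apply hw)) S

theorem image_inv_image (hs : IsScaling scale) {w : ℝ} (hw : 0 < w) (S : Set E) :
    scale w⁻¹ '' (scale w '' S) = S := by
  simp [image_image, hs.inv_apply_apply hw]

theorem injective (hs : IsScaling scale) {w : ℝ} (hw : 0 < w) : Function.Injective (scale w) :=
  Function.LeftInverse.injective (hs.inv_apply_apply hw)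

variable [MetricSpace E] {F : Set E}

theorem infDist_inv_apply_le (hs : IsScaling scale)
    (hexp : ∀ u : ℝ, 1 < u → ∀ y ∉ F, infDist y F < infDist (scale u y) F)
    {w : ℝ} (hw : 1 ≤ w) (x : E) : infDist (scale w⁻¹ x) F ≤ infDist x F := by
  rcases hw.eq_or_lt with rfl | hw
  · rw [inv_one, hs.one_apply]
  by_cases hx : scale w⁻¹ x ∈ F
  · rw [infDist_zero_of_mem hx]
    exact infDist_nonneg
  · simpa only [hs.apply_inv_apply (zero_lt_one.trans hw)] using (hexp w hw _ hx).le

theorem inv_apply_mem_thickening (hs : IsScaling scale)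
    (hexp : ∀ u : ℝ, 1 < u → ∀ y ∉ F, infDist y F < infDist (scale u y) F)
    {w : ℝ} (hw : 1 ≤ w) {ρ : ℝ} {x : E} (hx : x ∈ thickening ρ F) :
    scale w⁻¹ x ∈ thickening ρ F := by
  have hF : F.Nonempty := by
    obtain ⟨z, hz, -⟩ := mem_thickening_iff.1 hx
    exact ⟨z, hz⟩
  rw [mem_thickening_iff_infDist_lt hF] at hx ⊢
  exact (hs.infDist_inv_apply_le hexp hw x).trans_lt hx

end IsScaling

theorem isFiniteMeasure_withDensity_of_le_indicator {α : Type*} [MeasurableSpace α]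
    {μ : Measure α} {S : Set α} (hS : MeasurableSet S) (hμS : μ S ≠ ∞) {φ : α → ℝ≥0∞}
    (hφ : φ ≤ S.indicator 1) :
    IsFiniteMeasure (μ.withDensity φ) :=
  isFiniteMeasure_withDensity <| ne_top_of_le_ne_top hμS <|
    (lintegral_mono hφ).trans_eq (lintegral_indicator_one hS)

section TestFunctions

variable {E : Type*} [MetricSpace E]

structure IsTestFunction (F : Set E) (f : E → ℝ) : Prop where
  continuous : Continuous f
  bounded : ∃ C, ∀ x, |f x| ≤ C
  vanishes_near : ∃ r > 0, ∀ x ∈ thickening r F, f x = 0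

theorem MConvergesTo.tendsto_integral [MeasurableSpace E] {ν : ℝ → Measure E} {μ : Measure E}
    {F : Set E} (h : MConvergesTo ν μ F) {f : E → ℝ} (hf : IsTestFunction F f) :
    Tendsto (fun T => ∫ x, f x ∂(ν T)) atTop (𝓝 (∫ x, f x ∂μ)) :=
  h f hf.continuous hf.bounded hf.vanishes_near

theorem IsTestFunction.comp_scale_inv {scale : ℝ → E → E} {F : Set E} (hs : IsScaling scale)
    (hexp : ∀ u : ℝ, 1 < u → ∀ y ∉ F, infDist y F < infDist (scale u y) F)
    {w : ℝ} (hw : 1 ≤ w) (hcont : Continuous (scale w⁻¹)) {f : E → ℝ}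
    (hf : IsTestFunction F f) : IsTestFunction F fun x => f (scale w⁻¹ x) where
  continuous := hf.continuous.comp hcont
  bounded := hf.bounded.imp fun _ hC _ => hC _
  vanishes_near := hf.vanishes_near.imp fun _ ⟨hρ, h0⟩ =>
    ⟨hρ, fun _ hx => h0 _ (hs.inv_apply_mem_thickening hexp hw hx)⟩

variable [MeasurableSpace E] [BorelSpace E]

theorem measure_eq_of_integral_testFunction_eq {μ₁ μ₂ : Measure E} {F : Set E}
    (h₁ : ∀ r > 0, μ₁ (thickening r F)ᶜ ≠ ∞) (h₂ : ∀ r > 0, μ₂ (thickening r F)ᶜ ≠ ∞)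
    (h : ∀ f, IsTestFunction F f → ∫ x, f x ∂μ₁ = ∫ x, f x ∂μ₂)
    {r : ℝ} (hr : 0 < r) {B : Set E} (hB : MeasurableSet B) (hBF : Disjoint B (thickening r F)) :
    μ₁ B = μ₂ B := by
  -- cutting off near `F` makes both measures finite, so bounded continuous functions determine them
  set φ : E → ℝ≥0 := fun x => 1 - thickenedIndicator (half_pos hr) (thickening (r / 2) F) x
  have hφ_cont : Continuous φ := continuous_const.sub (thickenedIndicator _ _).continuous
  have hφ_le : ∀ x, φ x ≤ 1 := fun x => tsub_le_self
  have hφ_zero : ∀ x ∈ thickening (r / 2) F, φ x = 0 := fun x hx => by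
    simp only [φ, thickenedIndicator_one_of_mem_closure _ _ (subset_closure hx), tsub_self]
  have hφ_one : ∀ x ∉ thickening r F, φ x = 1 := fun x hx => by
    have : x ∉ thickening (r / 2) (thickening (r / 2) F) := fun h' =>
      hx (by simpa using thickening_thickening_subset (r / 2) (r / 2) F h')
    simp only [φ, thickenedIndicator_zero _ _ this, tsub_zero]
  have hS : MeasurableSet (thickening (r / 2) F)ᶜ := isOpen_thickening.measurableSet.compl
  have hφ_ind : (fun x => (φ x : ℝ≥0∞)) ≤ (thickening (r / 2) F)ᶜ.indicator 1 := fun x => by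
    by_cases hx : x ∈ thickening (r / 2) F
    · simp [hφ_zero x hx]
    · simpa [hx] using hφ_le x
  have hφ_B : ∀ μ : Measure E, μ.withDensity (fun x => φ x) B = μ B := fun μ => by
    rw [withDensity_apply _ hB, setLIntegral_congr_fun hB (g := fun _ => 1)
      (fun x hx => by simp [hφ_one x (hBF.notMem_of_mem_left hx)]), setLIntegral_const, one_mul]
  have := isFiniteMeasure_withDensity_of_le_indicator hS (h₁ _ (half_pos hr)) hφ_ind
  have := isFiniteMeasure_withDensity_of_le_indicator hS (h₂ _ (half_pos hr)) hφ_ind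
  have hcut : μ₁.withDensity (fun x => φ x) = μ₂.withDensity (fun x => φ x) := by
    refine ext_of_forall_integral_eq_of_IsFiniteMeasure fun f => ?_
    have hφf : IsTestFunction F fun x => φ x • f x :=
      { continuous := (NNReal.continuous_coe.comp hφ_cont).smul f.continuous
        bounded := ⟨‖f‖, fun x => by
          rw [NNReal.smul_def, smul_eq_mul, abs_mul, NNReal.abs_eq]
          exact (mul_le_of_le_one_left (abs_nonneg (f x)) (NNReal.coe_le_one.2 (hφ_le x))).trans
            (f.norm_coe_le_norm x)⟩
        vanishes_near := ⟨r / 2, half_pos hr, fun x hx => by simp [hφ_zero x hx]⟩ }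
    rw [integral_withDensity_eq_integral_smul hφ_cont.measurable,
      integral_withDensity_eq_integral_smul hφ_cont.measurable]
    exact h _ hφf
  rw [← hφ_B μ₁, hcut, hφ_B]

end TestFunctions

theorem measure_eq_of_disjoint_of_forall_disjoint_thickening {E : Type*} [MetricSpace E]
    [MeasurableSpace E] [OpensMeasurableSpace E] {μ₁ μ₂ : Measure E} {F : Set E} (hF : IsClosed F)
    (h : ∀ r > 0, ∀ B, MeasurableSet B → Disjoint B (thickening r F) → μ₁ B = μ₂ B)
    {A : Set E} (hA : MeasurableSet A) (hAF : Disjoint A F) : μ₁ A = μ₂ A := by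
  set B : ℕ → Set E := fun n => A \ thickening (1 / (n + 1)) F
  have hB_mono : Monotone B := fun m n hmn =>
    sdiff_subset_sdiff_right (thickening_mono (Nat.one_div_le_one_div hmn) F)
  have hB_union : ⋃ n, B n = A := by
    refine subset_antisymm (iUnion_subset fun n => sdiff_subset) fun x hx => ?_
    have hxF : x ∉ closure F := by
      rw [hF.closure_eq]; exact hAF.notMem_of_mem_left hx
    simp only [closure_eq_iInter_thickening, mem_iInter, not_forall] at hxF
    obtain ⟨δ, hδ, hxδ⟩ := hxF
    obtain ⟨n, hn⟩ := exists_nat_one_div_lt hδ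
    exact mem_iUnion.2 ⟨n, hx, fun hx' => hxδ (thickening_mono hn.le F hx')⟩
  rw [← hB_union, hB_mono.measure_iUnion, hB_mono.measure_iUnion]
  exact iSup_congr fun n => h _ Nat.one_div_pos_of_nat _
    (hA.diff isOpen_thickening.measurableSet) disjoint_sdiff_left

section ScaledLaw

variable {Ω E : Type*} [MeasurableSpace Ω] [MetricSpace E] [MeasurableSpace E]

noncomputable def scaledLaw (P : Measure Ω) (scale : ℝ → E → E) (X : Ω → E) (v : ℝ → ℝ) (T : ℝ) :
    Measure E :=
  ENNReal.ofReal (v T) • Measure.map (fun ω => scale T⁻¹ (X ω)) P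

variable {P : Measure Ω} {scale : ℝ → E → E} {X : Ω → E} {v : ℝ → ℝ}

theorem integral_scaledLaw [BorelSpace E] {T : ℝ} (hvT : 0 ≤ v T)
    (hXT : Measurable fun ω => scale T⁻¹ (X ω)) {f : E → ℝ} (hf : Measurable f) :
    ∫ x, f x ∂(scaledLaw P scale X v T) = v T * ∫ ω, f (scale T⁻¹ (X ω)) ∂P := by
  rw [scaledLaw, integral_smul_measure, integral_map hXT.aemeasurable hf.aestronglyMeasurable,
    ENNReal.toReal_ofReal hvT, smul_eq_mul]

theorem integral_scaledLaw_mul [BorelSpace E] (hs : IsScaling scale)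
    (hcont : ∀ a : ℝ, 0 < a → Continuous (scale a)) (hX : Measurable X) (hvpos : ∀ T, 0 < v T)
    {w T : ℝ} (hw : 0 < w) (hT : 0 < T) {f : E → ℝ} (hf : Continuous f) :
    ∫ x, f x ∂(scaledLaw P scale X v (w * T)) =
      v (w * T) / v T * ∫ x, f (scale w⁻¹ x) ∂(scaledLaw P scale X v T) := by
  have hXT : ∀ {a}, 0 < a → Measurable fun ω => scale a⁻¹ (X ω) := fun ha =>
    (hcont _ (inv_pos.2 ha)).measurable.comp hX
  rw [integral_scaledLaw (hvpos _).le (hXT (mul_pos hw hT)) hf.measurable,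
    integral_scaledLaw (f := fun x => f (scale w⁻¹ x)) (hvpos _).le (hXT hT)
      (hf.comp (hcont _ (inv_pos.2 hw))).measurable]
  simp_rw [hs.apply_apply _ _ (inv_pos.2 hw) (inv_pos.2 hT), mul_inv]
  field_simp [(hvpos T).ne']

theorem integral_eq_rpow_mul_integral_comp_of_mConvergesTo [BorelSpace E] (hs : IsScaling scale)
    (hcont : ∀ a : ℝ, 0 < a → Continuous (scale a)) (hX : Measurable X) (hvpos : ∀ T, 0 < v T)
    {w α : ℝ} (hw : 0 < w) (hv : Tendsto (fun T => v (w * T) / v T) atTop (𝓝 (w ^ α)))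
    {μ : Measure E} {F : Set E} (hconv : MConvergesTo (scaledLaw P scale X v) μ F)
    {f : E → ℝ} (hf : IsTestFunction F f) (hfw : IsTestFunction F fun x => f (scale w⁻¹ x)) :
    ∫ x, f x ∂μ = w ^ α * ∫ x, f (scale w⁻¹ x) ∂μ :=
  tendsto_nhds_unique ((hconv.tendsto_integral hf).comp (tendsto_id.const_mul_atTop hw)) <|
    (hv.mul (hconv.tendsto_integral hfw)).congr' <| (eventually_gt_atTop 0).mono fun _ hT =>
      (integral_scaledLaw_mul hs hcont hX hvpos hw hT hf.continuous).symm

end ScaledLaw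

section Homogeneity

variable {Ω E : Type*} [MeasurableSpace Ω] [MetricSpace E] [MeasurableSpace E] [BorelSpace E]
  {P : Measure Ω} {scale : ℝ → E → E} {X : Ω → E} {v : ℝ → ℝ} {F : Set E}

theorem map_scale_inv_apply_of_mConvergesTo (hs : IsScaling scale)
    (hcont : ∀ a : ℝ, 0 < a → Continuous (scale a))
    (hexp : ∀ u : ℝ, 1 < u → ∀ y ∉ F, infDist y F < infDist (scale u y) F)
    (hX : Measurable X) (hvpos : ∀ T, 0 < v T) {w α : ℝ} (hw : 1 ≤ w)
    (hv : Tendsto (fun T => v (w * T) / v T) atTop (𝓝 (w ^ α)))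
    {μ : Measure E} (hμ : ∀ r > 0, μ (thickening r F)ᶜ ≠ ∞)
    (hconv : MConvergesTo (scaledLaw P scale X v) μ F)
    {r : ℝ} (hr : 0 < r) {B : Set E} (hB : MeasurableSet B) (hBF : Disjoint B (thickening r F)) :
    μ.map (scale w⁻¹) B = (ENNReal.ofReal (w ^ (-α)) • μ) B := by
  have hw₀ : 0 < w := zero_lt_one.trans_le hw
  have hmeas : Measurable (scale w⁻¹) := (hcont _ (inv_pos.2 hw₀)).measurable
  refine measure_eq_of_integral_testFunction_eq (fun ρ hρ => ?_)
    (fun ρ hρ => ENNReal.mul_ne_top ENNReal.ofReal_ne_top (hμ ρ hρ)) (fun f hf => ?_) hr hB hBF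
  · rw [Measure.map_apply hmeas isOpen_thickening.measurableSet.compl]
    refine ne_top_of_le_ne_top (hμ ρ hρ) (measure_mono fun x hx hxρ => hx ?_)
    exact hs.inv_apply_mem_thickening hexp hw hxρ
  · have hfw := hf.comp_scale_inv hs hexp hw (hcont _ (inv_pos.2 hw₀))
    rw [integral_map hmeas.aemeasurable hf.continuous.aestronglyMeasurable, integral_smul_measure,
      ENNReal.toReal_ofReal (Real.rpow_nonneg hw₀.le _), smul_eq_mul, Real.rpow_neg hw₀.le,
      integral_eq_rpow_mul_integral_comp_of_mConvergesTo hs hcont hX hvpos hw₀ hv hconv hf hfw,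
      inv_mul_cancel_left₀ (Real.rpow_pos_of_pos hw₀ α).ne']

theorem measure_image_scale_of_one_le_of_mConvergesTo (hs : IsScaling scale)
    (hcont : ∀ a : ℝ, 0 < a → Continuous (scale a)) (hF : IsClosed F)
    (hexp : ∀ u : ℝ, 1 < u → ∀ y ∉ F, infDist y F < infDist (scale u y) F)
    (hX : Measurable X) (hvpos : ∀ T, 0 < v T) {w α : ℝ} (hw : 1 ≤ w)
    (hv : Tendsto (fun T => v (w * T) / v T) atTop (𝓝 (w ^ α)))
    {μ : Measure E} (hμ : ∀ r > 0, μ (thickening r F)ᶜ ≠ ∞)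
    (hconv : MConvergesTo (scaledLaw P scale X v) μ F)
    {A : Set E} (hA : MeasurableSet A) (hAF : Disjoint A F) :
    μ (scale w '' A) = ENNReal.ofReal (w ^ (-α)) * μ A := by
  have hw₀ : 0 < w := zero_lt_one.trans_le hw
  rw [hs.image_eq_preimage hw₀, ← Measure.map_apply (hcont _ (inv_pos.2 hw₀)).measurable hA,
    ← smul_eq_mul, ← Measure.smul_apply]
  exact measure_eq_of_disjoint_of_forall_disjoint_thickening hF (fun r hr B hB hBF =>
    map_scale_inv_apply_of_mConvergesTo hs hcont hexp hX hvpos hw hv hμ hconv hr hB hBF) hA hAF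

theorem measure_image_scale_of_mConvergesTo (hs : IsScaling scale)
    (hcont : ∀ a : ℝ, 0 < a → Continuous (scale a)) (hF : IsClosed F)
    (hcone : ∀ u : ℝ, 0 < u → scale u '' F = F)
    (hexp : ∀ u : ℝ, 1 < u → ∀ y ∉ F, infDist y F < infDist (scale u y) F)
    (hX : Measurable X) (hvpos : ∀ T, 0 < v T) {α : ℝ}
    (hv : ∀ δ > 0, Tendsto (fun T => v (δ * T) / v T) atTop (𝓝 (δ ^ α)))
    {μ : Measure E} (hμ : ∀ r > 0, μ (thickening r F)ᶜ ≠ ∞)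
    (hconv : MConvergesTo (scaledLaw P scale X v) μ F)
    {u : ℝ} (hu : 0 < u) {A : Set E} (hA : MeasurableSet A) (hAF : Disjoint A F) :
    μ (scale u '' A) = ENNReal.ofReal (u ^ (-α)) * μ A := by
  rcases le_total 1 u with hu₁ | hu₁
  · exact measure_image_scale_of_one_le_of_mConvergesTo hs hcont hF hexp hX hvpos hu₁
      (hv u hu) hμ hconv hA hAF
  have hA' : MeasurableSet (scale u '' A) := by
    rw [hs.image_eq_preimage hu]
    exact (hcont _ (inv_pos.2 hu)).measurable hA
  have hAF' : Disjoint (scale u '' A) F := by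
    rw [← hcone u hu]
    exact (disjoint_image_iff (hs.injective hu)).2 hAF
  have key := measure_image_scale_of_one_le_of_mConvergesTo hs hcont hF hexp hX hvpos
    (one_le_inv₀ hu |>.2 hu₁) (hv _ (inv_pos.2 hu)) hμ hconv hA' hAF'
  rw [hs.image_inv_image hu, Real.inv_rpow hu.le, Real.rpow_neg hu.le, inv_inv] at key
  rw [key, ← mul_assoc, ← ENNReal.ofReal_mul (Real.rpow_nonneg hu.le _), ← Real.rpow_add hu,
    neg_add_cancel, Real.rpow_zero, ENNReal.ofReal_one, one_mul]

end Homogeneity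

theorem limit_measure_homogeneous_general
    {E : Type*} [MetricSpace E]
    [MeasurableSpace E] [BorelSpace E]
    {Ω : Type*} [MeasurableSpace Ω] (P : Measure Ω)
    (scale : ℝ → E → E)
    (hscale_one : ∀ y, scale 1 y = y)
    (hscale_mul : ∀ a b : ℝ, 0 < a → 0 < b → ∀ y, scale a (scale b y) = scale (a * b) y)
    (hscale_cont : ∀ a : ℝ, 0 < a → Continuous (scale a))
    (F : Set E) (hF : IsClosed F)
    (hcone : ∀ u : ℝ, 0 < u → scale u '' F = F)
    (hcone_exp : ∀ u : ℝ, 1 < u → ∀ y ∉ F,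
      Metric.infDist y F < Metric.infDist (scale u y) F)
    (X : Ω → E) (hX : Measurable X)
    (v : ℝ → ℝ) (hvpos : ∀ T, 0 < v T) (α : ℝ)
    (hv : ∀ δ > 0, Tendsto (fun T => v (δ * T) / v T) atTop (𝓝 (δ ^ α)))
    (μ : Measure E)
    (hμfin : ∀ r > 0, μ (Metric.thickening r F)ᶜ ≠ ⊤)
    (hconv : MConvergesTo
      (fun T => ENNReal.ofReal (v T) • Measure.map (fun ω => scale T⁻¹ (X ω)) P) μ F) :
    ∀ u : ℝ, 0 < u → ∀ A : Set E, MeasurableSet A →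
      (∃ r > 0, Disjoint A (Metric.thickening r F)) →
      μ (scale u '' A) = ENNReal.ofReal (u ^ (-α)) * μ A := by
  rintro u hu A hA ⟨r, hr, hAr⟩
  exact measure_image_scale_of_mConvergesTo ⟨hscale_one, hscale_mul⟩ hscale_cont hF hcone
    hcone_exp hX hvpos hv hμfin hconv hu hA (hAr.mono_right (self_subset_thickening hr F))

/-- The limit measure of a regularly varying random element with index `α > 0` is
`(−α)`-homogeneous: `μ(uA) = u^{-α} μ(A)` for all `u > 0` and Borel `A` bounded away
from the cone `F`. -/
theorem limit_measure_homogeneous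
    {E : Type*} [MetricSpace E] [CompleteSpace E] [TopologicalSpace.SeparableSpace E]
    [MeasurableSpace E] [BorelSpace E]
    {Ω : Type*} [MeasurableSpace Ω] (P : Measure Ω) [IsProbabilityMeasure P]
    (scale : ℝ → E → E)
    (hscale_one : ∀ y, scale 1 y = y)
    (hscale_mul : ∀ a b : ℝ, 0 < a → 0 < b → ∀ y, scale a (scale b y) = scale (a * b) y)
    (hscale_cont : ∀ a : ℝ, 0 < a → Continuous (scale a))
    (F : Set E) (hF : IsClosed F)
    (hcone : ∀ u : ℝ, 0 < u → scale u '' F = F)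
    (hcone_exp : ∀ u : ℝ, 1 < u → ∀ y ∉ F,
      Metric.infDist y F < Metric.infDist (scale u y) F)
    (X : Ω → E) (hX : Measurable X)
    (v : ℝ → ℝ) (hvpos : ∀ T, 0 < v T) (α : ℝ) (hα : 0 < α)
    (hv : ∀ δ > 0, Tendsto (fun T => v (δ * T) / v T) atTop (𝓝 (δ ^ α)))
    (μ : Measure E) (hμne : μ ≠ 0)
    (hμfin : ∀ r > 0, μ (Metric.thickening r F)ᶜ ≠ ⊤)
    (hconv : MConvergesTo
      (fun T => ENNReal.ofReal (v T) • Measure.map (fun ω => scale T⁻¹ (X ω)) P) μ F) :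
    ∀ u : ℝ, 0 < u → ∀ A : Set E, MeasurableSet A →
      (∃ r > 0, Disjoint A (Metric.thickening r F)) →
      μ (scale u '' A) = ENNReal.ofReal (u ^ (-α)) * μ A :=
  limit_measure_homogeneous_general P scale hscale_one hscale_mul hscale_cont F hF hcone hcone_exp X
    hX v hvpos α hv μ hμfin hconv
end

section
/- Let W, W_1, W_2, … be i.i.d. nonnegative random variables and let G be an ℕ-valued random variable independent of (W_j) with P(G = g) = (1−m)m^g for some m ∈ (0,1). Set Q := Σ_{l=1}^{G} W_l. Suppose x_T → ∞ satisfies x_T P(W > ε T^{1−δ}) → 0 as T → ∞ for all ε > 0 and some δ ∈ (0,1), and x_T = O(T^p) for some p > 0. Then x_T P(Q > ε T) → 0 as T → ∞ for every ε > 0. -/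
/-!
Split according to the depth `G`. On `{G ≤ ⌊T^δ⌋}` the sum of at most `T^δ` waiting times
exceeds `εT` only if one of them exceeds `εT^(1-δ)`; by independence of `G` and the union bound
this costs at most `E[G] · P(W > εT^(1-δ)) = m/(1-m) · P(W > εT^(1-δ))`. The event `{G > T^δ}`
has probability at most `m^(T^δ)`, which decays faster than any power of `T`.
-/

open MeasureTheory Filter Set Topology ProbabilityTheory
open scoped ENNReal

section Probability

variable {Ω : Type*} [MeasurableSpace Ω] {μ : Measure Ω}

lemma measure_lt_sum_le_sum_measure {ι : Type*} (s : Finset ι) (Y : ι → Ω → ℝ) {a b : ℝ}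
    (hab : s.card * b ≤ a) :
    μ {ω | a < ∑ i ∈ s, Y i ω} ≤ ∑ i ∈ s, μ {ω | b < Y i ω} := by
  refine (measure_mono fun ω hω => ?_).trans (measure_biUnion_finset_le s _)
  by_contra! hle
  simp only [mem_iUnion, mem_ofPred_eq, not_exists, not_lt] at hle
  have hsum : ∑ i ∈ s, Y i ω ≤ s.card • b := Finset.sum_le_card_nsmul s _ b hle
  rw [nsmul_eq_mul] at hsum
  exact (hsum.trans hab).not_gt hω

lemma measure_lt_sum_range_le_of_identDistrib {Y : ℕ → Ω → ℝ}
    (hY : ∀ l, IdentDistrib (Y l) (Y 0) μ μ) {a b : ℝ} {g : ℕ} (hab : g * b ≤ a) :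
    μ {ω | a < ∑ l ∈ Finset.range g, Y (l + 1) ω} ≤ g * μ {ω | b < Y 0 ω} :=
  calc μ {ω | a < ∑ l ∈ Finset.range g, Y (l + 1) ω}
      ≤ ∑ l ∈ Finset.range g, μ {ω | b < Y (l + 1) ω} :=
        measure_lt_sum_le_sum_measure _ _ (by rwa [Finset.card_range])
    _ = g * μ {ω | b < Y 0 ω} := by
        have htail : ∀ l, μ {ω | b < Y l ω} = μ {ω | b < Y 0 ω} := fun l =>
          (hY l).measure_mem_eq measurableSet_Ioi
        simp only [htail, Finset.sum_const, Finset.card_range, nsmul_eq_mul]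

lemma ProbabilityTheory.IndepFun.measure_mem_at_le_tsum {β : Type*} [MeasurableSpace β] {G : Ω → ℕ}
    {Z : Ω → β} (h : IndepFun G Z μ) {B : ℕ → Set β} (hB : ∀ g, MeasurableSet (B g)) :
    μ {ω | Z ω ∈ B (G ω)} ≤ ∑' g, μ {ω | G ω = g} * μ (Z ⁻¹' B g) :=
  calc μ {ω | Z ω ∈ B (G ω)} ≤ μ (⋃ g, G ⁻¹' {g} ∩ Z ⁻¹' B g) :=
        measure_mono fun ω hω => mem_iUnion.2 ⟨G ω, rfl, hω⟩
    _ ≤ ∑' g, μ (G ⁻¹' {g} ∩ Z ⁻¹' B g) := measure_iUnion_le _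
    _ = ∑' g, μ {ω | G ω = g} * μ (Z ⁻¹' B g) :=
        tsum_congr fun g => h.measure_inter_preimage_eq_mul _ _ (measurableSet_singleton g) (hB g)

variable {m : ℝ} {G : Ω → ℕ}

lemma measure_tail_le_of_geometric (hm : m ∈ Ioo (0 : ℝ) 1)
    (hG : ∀ g : ℕ, μ {ω | G ω = g} = ENNReal.ofReal ((1 - m) * m ^ g)) (n : ℕ) :
    μ {ω | n ≤ G ω} ≤ ENNReal.ofReal (m ^ n) := by
  have hsum : HasSum (fun g : ℕ => (1 - m) * m ^ (g + n)) (m ^ n) := by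
    have h := (hasSum_geometric_of_lt_one hm.1.le hm.2).mul_left ((1 - m) * m ^ n)
    rw [mul_right_comm, mul_inv_cancel₀ (sub_pos.2 hm.2).ne', one_mul] at h
    exact h.congr_fun fun g => by ring
  have hnonneg : ∀ g : ℕ, 0 ≤ (1 - m) * m ^ (g + n) := fun g =>
    mul_nonneg (sub_nonneg.2 hm.2.le) (pow_nonneg hm.1.le _)
  calc μ {ω | n ≤ G ω} ≤ μ (⋃ g : ℕ, {ω | G ω = g + n}) :=
        measure_mono fun ω hω => mem_iUnion.2 ⟨G ω - n, (Nat.sub_add_cancel hω).symm⟩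
    _ ≤ ∑' g : ℕ, ENNReal.ofReal ((1 - m) * m ^ (g + n)) :=
        (measure_iUnion_le _).trans_eq (tsum_congr fun g => hG _)
    _ = ENNReal.ofReal (m ^ n) := by
        rw [← ENNReal.ofReal_tsum_of_nonneg hnonneg hsum.summable, hsum.tsum_eq]

lemma tsum_ofReal_geometric_mul_natCast (hm : m ∈ Ioo (0 : ℝ) 1) :
    ∑' g : ℕ, ENNReal.ofReal ((1 - m) * m ^ g) * g = ENNReal.ofReal (m / (1 - m)) := by
  have hsum : HasSum (fun g : ℕ => (1 - m) * m ^ g * g) (m / (1 - m)) := by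
    have h := (hasSum_coe_mul_geometric_of_norm_lt_one
      (by rw [Real.norm_of_nonneg hm.1.le]; exact hm.2 : ‖m‖ < 1)).mul_left (1 - m)
    rw [show (1 - m) * (m / (1 - m) ^ 2) = m / (1 - m) by
      field_simp [(sub_pos.2 hm.2).ne']] at h
    exact h.congr_fun fun g => by ring
  have hweight : ∀ g : ℕ, 0 ≤ (1 - m) * m ^ g := fun g =>
    mul_nonneg (sub_nonneg.2 hm.2.le) (pow_nonneg hm.1.le _)
  rw [← hsum.tsum_eq, ENNReal.ofReal_tsum_of_nonneg
    (fun g => mul_nonneg (hweight g) g.cast_nonneg) hsum.summable]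
  exact tsum_congr fun g => by rw [ENNReal.ofReal_mul (hweight g), ENNReal.ofReal_natCast]

lemma measure_lt_sum_range_le_of_geometric {W : ℕ → Ω → ℝ}
    (hW : ∀ l, IdentDistrib (W l) (W 0) μ μ) (hm : m ∈ Ioo (0 : ℝ) 1)
    (hG : ∀ g : ℕ, μ {ω | G ω = g} = ENNReal.ofReal ((1 - m) * m ^ g))
    (hGW : IndepFun G (fun ω l => W l ω) μ) {a b : ℝ} (hb : 0 ≤ b) {N : ℕ} (hab : N * b ≤ a) :
    μ {ω | a < ∑ l ∈ Finset.range (G ω), W (l + 1) ω}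
      ≤ ENNReal.ofReal (m / (1 - m)) * μ {ω | b < W 0 ω} + ENNReal.ofReal (m ^ (N + 1)) := by
  set B : ℕ → Set (ℕ → ℝ) := fun g => {w | g ≤ N ∧ a < ∑ l ∈ Finset.range g, w (l + 1)}
  have hB : ∀ g, MeasurableSet (B g) := fun g => by
    simp only [B, ofPred_and]
    exact (MeasurableSet.const (g ≤ N)).inter (measurableSet_lt measurable_const
      (Finset.measurable_sum _ fun l _ => measurable_pi_apply _))
  have hB_le : ∀ g : ℕ, μ ((fun ω l => W l ω) ⁻¹' B g) ≤ g * μ {ω | b < W 0 ω} := by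
    intro g
    by_cases hg : g ≤ N
    · simp only [B, hg, true_and]
      exact measure_lt_sum_range_le_of_identDistrib hW
        ((mul_le_mul_of_nonneg_right (by exact_mod_cast hg) hb).trans hab)
    · simp [B, hg]
  calc μ {ω | a < ∑ l ∈ Finset.range (G ω), W (l + 1) ω}
      ≤ μ ({ω | (fun l => W l ω) ∈ B (G ω)} ∪ {ω | N + 1 ≤ G ω}) := by
        refine measure_mono fun ω hω => ?_
        by_cases hGN : G ω ≤ N
        · exact Or.inl ⟨hGN, hω⟩
        · exact Or.inr (show N + 1 ≤ G ω by omega)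
    _ ≤ (∑' g : ℕ, ENNReal.ofReal ((1 - m) * m ^ g) * (g * μ {ω | b < W 0 ω}))
          + ENNReal.ofReal (m ^ (N + 1)) := by
        refine (measure_union_le _ _).trans (add_le_add ?_ (measure_tail_le_of_geometric hm hG _))
        refine (hGW.measure_mem_at_le_tsum hB).trans (ENNReal.tsum_le_tsum fun g => ?_)
        rw [hG]
        gcongr
        exact hB_le g
    _ = ENNReal.ofReal (m / (1 - m)) * μ {ω | b < W 0 ω} + ENNReal.ofReal (m ^ (N + 1)) := by
        simp_rw [← mul_assoc]
        rw [ENNReal.tsum_mul_right, tsum_ofReal_geometric_mul_natCast hm]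

lemma measureReal_lt_sum_range_le_of_geometric [IsFiniteMeasure μ] {W : ℕ → Ω → ℝ}
    (hW : ∀ l, IdentDistrib (W l) (W 0) μ μ) (hm : m ∈ Ioo (0 : ℝ) 1)
    (hG : ∀ g : ℕ, μ {ω | G ω = g} = ENNReal.ofReal ((1 - m) * m ^ g))
    (hGW : IndepFun G (fun ω l => W l ω) μ) {a b : ℝ} (hb : 0 ≤ b) {N : ℕ} (hab : N * b ≤ a) :
    μ.real {ω | a < ∑ l ∈ Finset.range (G ω), W (l + 1) ω}
      ≤ m / (1 - m) * μ.real {ω | b < W 0 ω} + m ^ (N + 1) := by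
  have h := measure_lt_sum_range_le_of_geometric hW hm hG hGW hb hab
  have hfin : ENNReal.ofReal (m / (1 - m)) * μ {ω | b < W 0 ω} ≠ ∞ :=
    ENNReal.mul_ne_top ENNReal.ofReal_ne_top (measure_ne_top _ _)
  refine (ENNReal.toReal_mono (ENNReal.add_ne_top.2 ⟨hfin, ENNReal.ofReal_ne_top⟩) h).trans_eq ?_
  rw [ENNReal.toReal_add hfin ENNReal.ofReal_ne_top, ENNReal.toReal_mul,
    ENNReal.toReal_ofReal (div_nonneg hm.1.le (sub_nonneg.2 hm.2.le)),
    ENNReal.toReal_ofReal (pow_nonneg hm.1.le _)]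
  rfl

end Probability

section Asymptotics

variable {δ m : ℝ}

lemma tendsto_rpow_mul_rpow_rpow_atTop_nhds_zero (p : ℝ) (hδ : 0 < δ)
    (hm : m ∈ Ioo (0 : ℝ) 1) : Tendsto (fun T : ℝ => T ^ p * m ^ T ^ δ) atTop (𝓝 0) := by
  have hlog : 0 < -Real.log m := neg_pos.2 (Real.log_neg hm.1 hm.2)
  refine ((tendsto_rpow_mul_exp_neg_mul_atTop_nhds_zero (p / δ) _ hlog).comp
    (tendsto_rpow_atTop hδ)).congr' ?_
  filter_upwards [eventually_ge_atTop 0] with T hT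
  rw [Function.comp_apply, ← Real.rpow_mul hT, mul_div_cancel₀ _ hδ.ne',
    Real.rpow_def_of_pos hm.1, neg_neg, mul_comm (Real.log m)]

lemma tendsto_mul_pow_floor_rpow_atTop_nhds_zero {x : ℝ → ℝ} {p : ℝ}
    (hx : x =O[atTop] fun T => T ^ p) (hδ : 0 < δ) (hm : m ∈ Ioo (0 : ℝ) 1) :
    Tendsto (fun T => x T * m ^ (⌊T ^ δ⌋₊ + 1)) atTop (𝓝 0) := by
  have hpow : (fun T : ℝ => m ^ (⌊T ^ δ⌋₊ + 1)) =O[atTop] fun T => m ^ T ^ δ := by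
    refine Asymptotics.isBigO_of_le _ fun T => ?_
    rw [Real.norm_of_nonneg (pow_nonneg hm.1.le _),
      Real.norm_of_nonneg (Real.rpow_nonneg hm.1.le _), ← Real.rpow_natCast]
    exact Real.rpow_le_rpow_of_exponent_ge hm.1 hm.2.le
      (by exact_mod_cast (Nat.lt_floor_add_one (T ^ δ)).le)
  exact (hx.mul hpow).trans_tendsto (tendsto_rpow_mul_rpow_rpow_atTop_nhds_zero p hδ hm)

end Asymptotics

theorem cluster_depth_waiting_time_negligible_general
    {Ω : Type*} [MeasurableSpace Ω] (P : Measure Ω) [IsProbabilityMeasure P]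
    (W : ℕ → Ω → ℝ) (hW : ∀ l, Measurable (W l))
    (hWident : ∀ l, Measure.map (W l) P = Measure.map (W 0) P)
    (m : ℝ) (hm : m ∈ Set.Ioo (0:ℝ) 1)
    (G : Ω → ℕ)
    (hGgeom : ∀ g : ℕ, P {ω | G ω = g} = ENNReal.ofReal ((1 - m) * m ^ g))
    (hGindep : IndepFun G (fun ω => fun l => W l ω) P)
    (Q : Ω → ℝ) (hQ : Q = fun ω => ∑ l ∈ Finset.range (G ω), W (l + 1) ω)
    (x : ℝ → ℝ)
    (δ : ℝ) (hδ : δ ∈ Set.Ioo (0:ℝ) 1)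
    (hxW : ∀ ε > 0, Tendsto
      (fun T => x T * (P {ω | ε * T ^ (1 - δ) < W 0 ω}).toReal) atTop (𝓝 0))
    (p : ℝ) (hxpoly : (fun T => x T) =O[atTop] (fun T : ℝ => T ^ p)) :
    ∀ ε > 0, Tendsto (fun T => x T * (P {ω | ε * T < Q ω}).toReal) atTop (𝓝 0) := by
  intro ε hε
  subst hQ
  have hWid : ∀ l, IdentDistrib (W l) (W 0) P P := fun l =>
    ⟨(hW l).aemeasurable, (hW 0).aemeasurable, hWident l⟩
  have hbound : ∀ᶠ T in atTop, ‖x T * (P {ω | ε * T < ∑ l ∈ Finset.range (G ω), W (l + 1) ω}).toReal‖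
      ≤ m / (1 - m) * ‖x T * (P {ω | ε * T ^ (1 - δ) < W 0 ω}).toReal‖
        + ‖x T * m ^ (⌊T ^ δ⌋₊ + 1)‖ := by
    filter_upwards [eventually_gt_atTop 0] with T hT
    have hN : ⌊T ^ δ⌋₊ * (ε * T ^ (1 - δ)) ≤ ε * T :=
      calc ⌊T ^ δ⌋₊ * (ε * T ^ (1 - δ)) ≤ T ^ δ * (ε * T ^ (1 - δ)) := by
            gcongr; exact Nat.floor_le (by positivity)
        _ = ε * T := by rw [mul_left_comm, ← Real.rpow_add hT, add_sub_cancel, Real.rpow_one]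
    have h := measureReal_lt_sum_range_le_of_geometric hWid hm hGgeom hGindep (by positivity) hN
    simp only [norm_mul, Real.norm_of_nonneg ENNReal.toReal_nonneg,
      Real.norm_of_nonneg (pow_nonneg hm.1.le _)]
    calc ‖x T‖ * (P {ω | ε * T < ∑ l ∈ Finset.range (G ω), W (l + 1) ω}).toReal
        ≤ ‖x T‖ * (m / (1 - m) * (P {ω | ε * T ^ (1 - δ) < W 0 ω}).toReal
          + m ^ (⌊T ^ δ⌋₊ + 1)) := by gcongr; exact h
      _ = _ := by ring
  have hlim := ((hxW ε hε).norm.const_mul (m / (1 - m))).add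
    (tendsto_mul_pow_floor_rpow_atTop_nhds_zero hxpoly hδ.1 hm).norm
  rw [norm_zero, mul_zero, zero_add] at hlim
  exact squeeze_zero_norm' hbound hlim

/-- Tail negligibility of cluster arrival times at geometric generation depth:
if `Q = Σ_{l=1}^{G} W_l` with `W_l` i.i.d. nonnegative, `G` geometric with parameter
`1−m` independent of the `W_l`, `x_T → ∞` grows at most polynomially and
`x_T P(W > ε T^{1−δ}) → 0` for all `ε > 0` and some `δ ∈ (0,1)`, then
`x_T P(Q > ε T) → 0` as `T → ∞` for every `ε > 0`. -/
theorem cluster_depth_waiting_time_negligible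
    {Ω : Type*} [MeasurableSpace Ω] (P : Measure Ω) [IsProbabilityMeasure P]
    (W : ℕ → Ω → ℝ) (hW : ∀ l, Measurable (W l)) (hWnonneg : ∀ l ω, 0 ≤ W l ω)
    (hWiid : iIndepFun W P)
    (hWident : ∀ l, Measure.map (W l) P = Measure.map (W 0) P)
    (m : ℝ) (hm : m ∈ Set.Ioo (0:ℝ) 1)
    (G : Ω → ℕ) (hG : Measurable G)
    (hGgeom : ∀ g : ℕ, P {ω | G ω = g} = ENNReal.ofReal ((1 - m) * m ^ g))
    (hGindep : IndepFun G (fun ω => fun l => W l ω) P)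
    (Q : Ω → ℝ) (hQ : Q = fun ω => ∑ l ∈ Finset.range (G ω), W (l + 1) ω)
    (x : ℝ → ℝ) (hxpos : ∀ T, 0 < x T) (hxinf : Tendsto x atTop atTop)
    (δ : ℝ) (hδ : δ ∈ Set.Ioo (0:ℝ) 1)
    (hxW : ∀ ε > 0, Tendsto
      (fun T => x T * (P {ω | ε * T ^ (1 - δ) < W 0 ω}).toReal) atTop (𝓝 0))
    (p : ℝ) (hp : 0 < p) (hxpoly : (fun T => x T) =O[atTop] (fun T : ℝ => T ^ p)) :
    ∀ ε > 0, Tendsto (fun T => x T * (P {ω | ε * T < Q ω}).toReal) atTop (𝓝 0) :=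
  cluster_depth_waiting_time_negligible_general P W hW hWident m hm G hGgeom hGindep Q hQ x δ hδ hxW
    p hxpoly
end

section
/- Let D = Σ_{j=0}^{K} Z_j where (Z_j)_{j≥0} are i.i.d. nonnegative with P(Z > x) ∼ c₂ P(D > x) for some c₂ ∈ [0,∞), D is regularly varying with index α > 1, K is ℕ-valued with P(K > x) ∼ c₁ P(D > x) for some c₁ ∈ [0,∞), and the pair (K, D) is jointly regularly varying with index α. Then for every p ∈ (1, α) and r > 0, limsup_{x→∞} E[(K/x)^p | D > rx] < ∞. -/
open MeasureTheory Filter Set Topology ProbabilityTheory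
open scoped ENNReal

/-- A positive function is slowly varying if `ℓ(tx)/ℓ(x) → 1` as `x → ∞` for every `t > 0`. -/
def SlowlyVarying (ℓ : ℝ → ℝ) : Prop :=
  (∀ᶠ x in atTop, 0 < ℓ x) ∧ ∀ t > 0, Tendsto (fun x => ℓ (t * x) / ℓ x) atTop (𝓝 1)

/-!
Since `P(D > u)` is regularly varying of index `-α` and `p < α`, eventually
`P(D > 2u) ≤ q P(D > u)` for some `q < 2⁻ᵖ`, so `P(K > 2ⁿ x) ≲ qⁿ P(D > x)`. Splitting
`{K > x}` into the dyadic shells `2ⁿ x < K ≤ 2ⁿ⁺¹ x`, on which `(K/x)ᵖ ≤ 2⁽ⁿ⁺¹⁾ᵖ`, gives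
`E[(K/x)ᵖ; D > rx] ≤ P(D > rx) + 2ᵖ P(K > x) / (1 - 2ᵖ q)`,
and `P(K > x) ≲ P(D > x) ≲ P(D > rx)`.
-/

namespace SlowlyVarying

variable {ℓ f : ℝ → ℝ} {α : ℝ}

theorem eventually_pos_of_eq_rpow_mul (hℓ : SlowlyVarying ℓ)
    (hf : ∀ x > 0, f x = x ^ (-α) * ℓ x) : ∀ᶠ x in atTop, 0 < f x := by
  filter_upwards [hℓ.1, eventually_gt_atTop 0] with x hℓx hx
  rw [hf x hx]
  positivity

theorem tendsto_div_of_eq_rpow_mul (hℓ : SlowlyVarying ℓ)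
    (hf : ∀ x > 0, f x = x ^ (-α) * ℓ x) {t : ℝ} (ht : 0 < t) :
    Tendsto (fun x => f (t * x) / f x) atTop (𝓝 (t ^ (-α))) := by
  have h := (hℓ.2 t ht).const_mul (t ^ (-α))
  rw [mul_one] at h
  refine h.congr' ?_
  filter_upwards [eventually_gt_atTop 0] with x hx
  rw [hf _ (mul_pos ht hx), hf x hx, Real.mul_rpow ht.le hx.le, mul_right_comm,
    mul_comm _ (x ^ (-α)), mul_div_mul_left _ _ (Real.rpow_pos_of_pos hx _).ne', mul_div_assoc]

end SlowlyVarying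

theorem eventually_le_ofReal_mul_of_tendsto_toReal_div {F G : ℝ → ℝ≥0∞} {l : Filter ℝ}
    (hF : ∀ u, F u ≠ ∞) {L c : ℝ} (h : Tendsto (fun u => (F u).toReal / (G u).toReal) l (𝓝 L))
    (hLc : L < c) (hG : ∀ᶠ u in l, 0 < (G u).toReal) :
    ∀ᶠ u in l, F u ≤ ENNReal.ofReal c * G u := by
  filter_upwards [h.eventually_lt_const hLc, hG] with u hlt hpos
  rw [← ENNReal.ofReal_toReal (hF u),
    ← ENNReal.ofReal_toReal (ENNReal.toReal_pos_iff.1 hpos).2.ne,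
    ← ENNReal.ofReal_mul' ENNReal.toReal_nonneg]
  exact ENNReal.ofReal_le_ofReal ((div_lt_iff₀ hpos).1 hlt).le

theorem le_pow_mul_of_le_mul_two {F : ℝ → ℝ≥0∞} {q : ℝ≥0∞} {X x : ℝ}
    (hF : ∀ u ≥ X, F (2 * u) ≤ q * F u) (hX : X ≤ x) (hx : 0 ≤ x) :
    ∀ n : ℕ, F (2 ^ n * x) ≤ q ^ n * F x
  | 0 => by simp
  | n + 1 => by
    have hXn : X ≤ 2 ^ n * x := hX.trans (le_mul_of_one_le_left hx (one_le_pow₀ one_le_two))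
    calc F (2 ^ (n + 1) * x) = F (2 * (2 ^ n * x)) := by ring_nf
      _ ≤ q * (q ^ n * F x) :=
        (hF _ hXn).trans (mul_le_mul_right (le_pow_mul_of_le_mul_two hF hX hx n) q)
      _ = q ^ (n + 1) * F x := by ring

theorem exists_two_pow_lt_le {w : ℝ} (hw : 1 < w) : ∃ n : ℕ, 2 ^ n < w ∧ w ≤ 2 ^ (n + 1) := by
  classical
  have hex : ∃ m : ℕ, w ≤ 2 ^ m := (pow_unbounded_of_one_lt w one_lt_two).imp fun _ => le_of_lt
  obtain ⟨n, hn⟩ := Nat.exists_eq_succ_of_ne_zero (n := Nat.find hex) fun h0 => by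
    have := Nat.find_spec hex
    rw [h0, pow_zero] at this
    exact this.not_gt hw
  refine ⟨n, not_le.1 (Nat.find_min hex (by omega)), ?_⟩
  rw [← Nat.succ_eq_add_one, ← hn]
  exact Nat.find_spec hex

theorem ofReal_rpow_le_one_add_tsum {w p : ℝ} (hw : 0 ≤ w) (hp : 0 ≤ p) :
    ENNReal.ofReal (w ^ p) ≤
      1 + ∑' n : ℕ, (Ioi (2 ^ n : ℝ)).indicator (fun _ => ENNReal.ofReal (2 ^ p) ^ (n + 1)) w := by
  rcases le_or_gt w 1 with hw1 | hw1
  · exact (ENNReal.ofReal_le_one.2 (Real.rpow_le_one hw hw1 hp)).trans le_self_add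
  obtain ⟨n, hlt, hle⟩ := exists_two_pow_lt_le hw1
  calc ENNReal.ofReal (w ^ p) ≤ ENNReal.ofReal (((2 : ℝ) ^ (n + 1)) ^ p) :=
        ENNReal.ofReal_le_ofReal (Real.rpow_le_rpow hw hle hp)
    _ = (Ioi (2 ^ n : ℝ)).indicator (fun _ => ENNReal.ofReal (2 ^ p) ^ (n + 1)) w := by
        rw [indicator_of_mem (mem_Ioi.2 hlt), ← ENNReal.ofReal_pow (by positivity),
          ← Real.rpow_natCast, ← Real.rpow_natCast, ← Real.rpow_mul zero_le_two,
          ← Real.rpow_mul zero_le_two, mul_comm]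
    _ ≤ ∑' k : ℕ, (Ioi (2 ^ k : ℝ)).indicator (fun _ => ENNReal.ofReal (2 ^ p) ^ (k + 1)) w :=
        ENNReal.le_tsum n
    _ ≤ _ := le_add_self

section Moments

variable {Ω : Type*} [MeasurableSpace Ω] {P : Measure Ω}

theorem setLIntegral_ofReal_rpow_le {W : Ω → ℝ} (hW : Measurable W) (hW0 : ∀ ω, 0 ≤ W ω)
    {p : ℝ} (hp : 0 ≤ p) (S : Set Ω) {q B : ℝ≥0∞}
    (htail : ∀ n : ℕ, P {ω | 2 ^ n < W ω} ≤ q ^ n * B) :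
    ∫⁻ ω in S, ENNReal.ofReal (W ω ^ p) ∂P ≤
      P S + ENNReal.ofReal (2 ^ p) * B * (1 - ENNReal.ofReal (2 ^ p) * q)⁻¹ := by
  set a := ENNReal.ofReal (2 ^ p)
  have hlayer : ∀ n : ℕ, ∫⁻ ω in S, (Ioi (2 ^ n : ℝ)).indicator (fun _ => a ^ (n + 1)) (W ω) ∂P
      ≤ a ^ (n + 1) * (q ^ n * B) := by
    intro n
    have hmeas : MeasurableSet (W ⁻¹' Ioi (2 ^ n)) := hW measurableSet_Ioi
    simp_rw [← indicator_comp_right, Function.comp_def]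
    rw [lintegral_indicator_const hmeas]
    exact mul_le_mul_right ((Measure.restrict_apply_le _ _).trans (htail n)) _
  calc ∫⁻ ω in S, ENNReal.ofReal (W ω ^ p) ∂P
      ≤ ∫⁻ ω in S, (1 + ∑' n : ℕ, (Ioi (2 ^ n : ℝ)).indicator (fun _ => a ^ (n + 1)) (W ω)) ∂P :=
        lintegral_mono fun ω => ofReal_rpow_le_one_add_tsum (hW0 ω) hp
    _ = P S + ∑' n : ℕ, ∫⁻ ω in S, (Ioi (2 ^ n : ℝ)).indicator (fun _ => a ^ (n + 1)) (W ω) ∂P := by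
        rw [lintegral_add_left measurable_const, setLIntegral_one]
        exact congrArg (P S + ·) (lintegral_tsum fun n =>
          ((measurable_const.indicator measurableSet_Ioi).comp hW).aemeasurable)
    _ ≤ P S + ∑' n : ℕ, a ^ (n + 1) * (q ^ n * B) := by gcongr with n; exact hlayer n
    _ = P S + a * B * (1 - a * q)⁻¹ := by
        rw [← ENNReal.tsum_geometric, ← ENNReal.tsum_mul_left]
        congr 1
        exact tsum_congr fun n => by ring

theorem setIntegral_div_toReal_le [IsFiniteMeasure P] {f : Ω → ℝ} (hf : ∀ ω, 0 ≤ f ω)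
    (hfm : Measurable f) {S : Set Ω} {M : ℝ≥0∞} (hM : M ≠ ∞)
    (h : ∫⁻ ω in S, ENNReal.ofReal (f ω) ∂P ≤ M * P S) :
    (∫ ω in S, f ω ∂P) / (P S).toReal ≤ M.toReal := by
  rw [integral_eq_lintegral_of_nonneg_ae (ae_of_all _ hf) hfm.aestronglyMeasurable]
  refine div_le_of_le_mul₀ ENNReal.toReal_nonneg ENNReal.toReal_nonneg ?_
  rw [← ENNReal.toReal_mul]
  exact ENNReal.toReal_mono (ENNReal.mul_ne_top hM (measure_ne_top _ _)) h

theorem isBoundedUnder_setIntegral_rpow_div_of_tail_le [IsFiniteMeasure P] {Y : Ω → ℝ}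
    (hY : Measurable Y) (hY0 : ∀ ω, 0 ≤ Y ω) {p : ℝ} (hp : 0 ≤ p) {F : ℝ → ℝ≥0∞}
    {S : ℝ → Set Ω} {q C C' : ℝ≥0∞} (hq : ENNReal.ofReal (2 ^ p) * q < 1) (hC : C ≠ ∞)
    (hC' : C' ≠ ∞) (hF : ∀ᶠ u in atTop, F (2 * u) ≤ q * F u)
    (hYF : ∀ᶠ u in atTop, P {ω | u < Y ω} ≤ C * F u)
    (hFS : ∀ᶠ x in atTop, F x ≤ C' * P (S x)) :
    IsBoundedUnder (· ≤ ·) atTop fun x => (∫ ω in S x, (Y ω / x) ^ p ∂P) / (P (S x)).toReal := by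
  set a := ENNReal.ofReal (2 ^ p)
  set M := 1 + a * C * C' * (1 - a * q)⁻¹
  have hM : M ≠ ∞ := by
    have : (1 - a * q)⁻¹ ≠ ∞ := ENNReal.inv_ne_top.2 (tsub_pos_of_lt hq).ne'
    finiteness
  obtain ⟨X, hX⟩ := eventually_atTop.1 (hF.and hYF)
  refine ⟨M.toReal, eventually_map.2 ?_⟩
  filter_upwards [eventually_ge_atTop X, eventually_gt_atTop 0, hFS] with x hxX hx hxS
  have htail : ∀ n : ℕ, P {ω | 2 ^ n < Y ω / x} ≤ q ^ n * (C * F x) := fun n =>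
    calc P {ω | 2 ^ n < Y ω / x} = P {ω | 2 ^ n * x < Y ω} := by simp_rw [lt_div_iff₀ hx]
      _ ≤ C * F (2 ^ n * x) :=
        (hX _ (hxX.trans (le_mul_of_one_le_left hx.le (one_le_pow₀ one_le_two)))).2
      _ ≤ C * (q ^ n * F x) :=
        mul_le_mul_right (le_pow_mul_of_le_mul_two (fun u hu => (hX u hu).1) hxX hx.le n) C
      _ = q ^ n * (C * F x) := by ring
  have hYx0 : ∀ ω, 0 ≤ Y ω / x := fun ω => div_nonneg (hY0 ω) hx.le
  refine setIntegral_div_toReal_le (fun ω => Real.rpow_nonneg (hYx0 ω) p)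
    ((hY.div_const x).pow_const p) hM ?_
  calc ∫⁻ ω in S x, ENNReal.ofReal ((Y ω / x) ^ p) ∂P
      ≤ P (S x) + a * (C * F x) * (1 - a * q)⁻¹ :=
        setLIntegral_ofReal_rpow_le (hY.div_const x) hYx0 hp (S x) htail
    _ ≤ P (S x) + a * (C * (C' * P (S x))) * (1 - a * q)⁻¹ := by gcongr
    _ = M * P (S x) := by ring

end Moments

theorem conditional_moment_bound_cluster_size_general
    {Ω : Type*} [MeasurableSpace Ω] (P : Measure Ω) [IsProbabilityMeasure P]
    (K : Ω → ℕ) (hK : Measurable K)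
    (D : Ω → ℝ)
    -- `D` is regularly varying with index `α > 1`
    (α : ℝ) (ℓ : ℝ → ℝ) (hℓ : SlowlyVarying ℓ)
    (htail : ∀ x > 0, (P {ω | x < D ω}).toReal = x ^ (-α) * ℓ x)
    -- tail equivalences of `Z` and `K` with `D`
    (c₁ : ℝ)
    (hKtail : Tendsto (fun x => (P {ω | x < (K ω : ℝ)}).toReal /
      (P {ω | x < D ω}).toReal) atTop (𝓝 c₁)) :
    ∀ p ∈ Set.Ioo (1:ℝ) α, ∀ r > (0:ℝ),
      Filter.IsBoundedUnder (· ≤ ·) atTop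
        (fun x => (∫ ω in {ω | r * x < D ω}, ((K ω : ℝ) / x) ^ p ∂P) /
          (P {ω | r * x < D ω}).toReal) := by
  rintro p ⟨hp1, hpα⟩ r hr
  have hDpos : ∀ᶠ u in atTop, 0 < (P {ω | u < D ω}).toReal :=
    hℓ.eventually_pos_of_eq_rpow_mul htail
  have hr_atTop : Tendsto (r * ·) atTop atTop := tendsto_id.const_mul_atTop hr
  obtain ⟨q, hαq, hqp⟩ : ∃ q, (2 : ℝ) ^ (-α) < q ∧ q < 2 ^ (-p) :=
    exists_between (Real.rpow_lt_rpow_of_exponent_lt one_lt_two (neg_lt_neg hpα))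
  have hq : ENNReal.ofReal (2 ^ p) * ENNReal.ofReal q < 1 := by
    rw [← ENNReal.ofReal_mul (by positivity), ENNReal.ofReal_lt_one]
    calc (2 : ℝ) ^ p * q < 2 ^ p * 2 ^ (-p) := by gcongr
      _ = 1 := by rw [← Real.rpow_add two_pos, add_neg_cancel, Real.rpow_zero]
  have hDr : Tendsto (fun x => (P {ω | x < D ω}).toReal / (P {ω | r * x < D ω}).toReal)
      atTop (𝓝 (r⁻¹ ^ (-α))) := by
    refine ((hℓ.tendsto_div_of_eq_rpow_mul htail (inv_pos.2 hr)).comp hr_atTop).congr fun x => ?_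
    simp [inv_mul_cancel_left₀ hr.ne']
  exact isBoundedUnder_setIntegral_rpow_div_of_tail_le (S := fun x => {ω | r * x < D ω})
    (measurable_from_top.comp hK) (fun ω => Nat.cast_nonneg _) (by linarith) hq
    ENNReal.ofReal_ne_top ENNReal.ofReal_ne_top
    (eventually_le_ofReal_mul_of_tendsto_toReal_div (fun _ => measure_ne_top _ _)
      (hℓ.tendsto_div_of_eq_rpow_mul htail two_pos) hαq hDpos)
    (eventually_le_ofReal_mul_of_tendsto_toReal_div (fun _ => measure_ne_top _ _)
      hKtail (lt_add_one c₁) hDpos)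
    (eventually_le_ofReal_mul_of_tendsto_toReal_div (fun _ => measure_ne_top _ _)
      hDr (lt_add_one _) (hr_atTop.eventually hDpos))

/-- Conditional moment bound for a jointly regularly varying pair `(K, D)` of index
`α > 1`, where `D = Σ_{j=0}^{K} Z_j` is a cluster sum with i.i.d. nonnegative summands
whose tails are comparable to that of `D`: for every `p ∈ (1, α)` and `r > 0`,
`limsup_{x → ∞} E[(K/x)^p | D > rx] < ∞`. -/
theorem conditional_moment_bound_cluster_size
    {Ω : Type*} [MeasurableSpace Ω] (P : Measure Ω) [IsProbabilityMeasure P]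
    (K : Ω → ℕ) (hK : Measurable K)
    (Z : ℕ → Ω → ℝ) (hZ : ∀ j, Measurable (Z j)) (hZnonneg : ∀ j ω, 0 ≤ Z j ω)
    (hZiid : iIndepFun Z P)
    (hZident : ∀ j, Measure.map (Z j) P = Measure.map (Z 0) P)
    (D : Ω → ℝ) (hD : D = fun ω => ∑ j ∈ Finset.range (K ω + 1), Z j ω)
    -- `D` is regularly varying with index `α > 1`
    (α : ℝ) (hα : 1 < α) (ℓ : ℝ → ℝ) (hℓ : SlowlyVarying ℓ)
    (htail : ∀ x > 0, (P {ω | x < D ω}).toReal = x ^ (-α) * ℓ x)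
    -- tail equivalences of `Z` and `K` with `D`
    (c₁ c₂ : ℝ) (hc₁ : 0 ≤ c₁) (hc₂ : 0 ≤ c₂)
    (hKtail : Tendsto (fun x => (P {ω | x < (K ω : ℝ)}).toReal /
      (P {ω | x < D ω}).toReal) atTop (𝓝 c₁))
    (hZtail : Tendsto (fun x => (P {ω | x < Z 0 ω}).toReal /
      (P {ω | x < D ω}).toReal) atTop (𝓝 c₂))
    -- joint regular variation of `(K, D)` with index `α`
    (v : ℝ → ℝ) (hvpos : ∀ T, 0 < v T)
    (hv : ∀ δ > 0, Tendsto (fun T => v (δ * T) / v T) atTop (𝓝 (δ ^ α)))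
    (μ : Measure (ℝ × ℝ)) (hμne : μ ≠ 0)
    (hjrv : MConvergesTo
      (fun T => ENNReal.ofReal (v T) •
        Measure.map (fun ω => (T⁻¹ * (K ω : ℝ), T⁻¹ * D ω)) P) μ
      ({((0:ℝ), (0:ℝ))} : Set (ℝ × ℝ))) :
    ∀ p ∈ Set.Ioo (1:ℝ) α, ∀ r > (0:ℝ),
      Filter.IsBoundedUnder (· ≤ ·) atTop
        (fun x => (∫ ω in {ω | r * x < D ω}, ((K ω : ℝ) / x) ^ p ∂P) /
          (P {ω | r * x < D ω}).toReal) :=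
  conditional_moment_bound_cluster_size_general P K hK D α ℓ hℓ htail c₁ hKtail
end

section
/- Let x ∈ D([0,1], ℝ) be nondecreasing with finitely many jumps, all of positive size, and let x_k be the pure-jump path keeping only the k+1 largest jumps of x (at the same locations). If the total size of the discarded jumps plus the continuous variation of x is at most η, then d_{M1}(x, x_k) ≤ η. -/
open MeasureTheory Filter Set Topology

/-- A real-valued function on `[0,1]` is càdlàg: right-continuous on `[0,1)` and with
left limits on `(0,1]`. -/
def Cadlag (f : ℝ → ℝ) : Prop :=
  (∀ t ∈ Set.Ico (0:ℝ) 1, ContinuousWithinAt f (Set.Ici t) t) ∧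
  (∀ t ∈ Set.Ioc (0:ℝ) 1, Tendsto f (nhdsWithin t (Set.Iio t)) (nhds (Function.leftLim f t)))

/-- The completed graph of a càdlàg function `f` on `[0,1]`. -/
def graphM1 (f : ℝ → ℝ) : Set (ℝ × ℝ) :=
  {p | p.1 ∈ Set.Icc (0:ℝ) 1 ∧
    p.2 ∈ Set.Icc (min (Function.leftLim f p.1) (f p.1)) (max (Function.leftLim f p.1) (f p.1))}

/-- The natural (total) order on the completed graph of `f`. -/
def graphLe (f : ℝ → ℝ) (p q : ℝ × ℝ) : Prop :=
  p.1 < q.1 ∨ (p.1 = q.1 ∧ |Function.leftLim f p.1 - p.2| ≤ |Function.leftLim f q.1 - q.2|)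

/-- `(r, u)` is a parametric representation of `f`: a continuous nondecreasing map of
`[0,1]` onto the completed graph of `f`. -/
structure IsParamRep (f : ℝ → ℝ) (r u : ℝ → ℝ) : Prop where
  cont_r : ContinuousOn r (Set.Icc 0 1)
  cont_u : ContinuousOn u (Set.Icc 0 1)
  onto : (fun s => (r s, u s)) '' (Set.Icc 0 1) = graphM1 f
  mono : ∀ s ∈ Set.Icc (0:ℝ) 1, ∀ s' ∈ Set.Icc (0:ℝ) 1, s ≤ s' →
    graphLe f (r s, u s) (r s', u s')

/-- Skorokhod's `M1` distance on `D([0,1], ℝ)`. -/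
noncomputable def M1Dist (f g : ℝ → ℝ) : ℝ :=
  sInf {d | ∃ r₁ u₁ r₂ u₂, IsParamRep f r₁ u₁ ∧ IsParamRep g r₂ u₂ ∧
    d = max (⨆ s : Set.Icc (0:ℝ) 1, |r₁ s - r₂ s|) (⨆ s : Set.Icc (0:ℝ) 1, |u₁ s - u₂ s|)}

/-! Write `x = x_k + d`, where `d` (the continuous part plus the discarded jumps) is
nondecreasing with `d (0-) = 0` and `d 1 ≤ η`. Parametrize the completed graph of `x` by
`w = s + x s`, which increases along the graph, vertical segments included, and use the same time
coordinate for `x_k`: each jump of `x_k` is at most the jump of `x` at the same time, so `x_k` can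
cross it proportionally while `x` crosses its own. At time `p` the two spatial coordinates then
differ by an amount between `d (p-)` and `d p`, hence in `[0, d 1]`. -/

open Function

/-- The first time in `[0, 1]` at which `g` reaches `z`; junk value `0` if there is none. -/
noncomputable def genInv (g : ℝ → ℝ) (z : ℝ) : ℝ := sInf {s ∈ Icc (0:ℝ) 1 | z ≤ g s}

section genInv

variable {g : ℝ → ℝ} {z : ℝ}

theorem bddBelow_genInv_set : BddBelow {s ∈ Icc (0:ℝ) 1 | z ≤ g s} :=
  ⟨0, fun _ hs => hs.1.1⟩

theorem genInv_le {s : ℝ} (hs : s ∈ Icc (0:ℝ) 1) (hzs : z ≤ g s) : genInv g z ≤ s :=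
  csInf_le bddBelow_genInv_set ⟨hs, hzs⟩

theorem le_genInv {p : ℝ} (hz : z ≤ g 1) (h : ∀ s ∈ Icc (0:ℝ) 1, z ≤ g s → p ≤ s) :
    p ≤ genInv g z :=
  le_csInf ⟨1, right_mem_Icc.2 zero_le_one, hz⟩ fun s hs => h s hs.1 hs.2

theorem genInv_mem (hz : z ≤ g 1) : genInv g z ∈ Icc (0:ℝ) 1 :=
  ⟨le_genInv hz fun _ hs _ => hs.1, genInv_le (right_mem_Icc.2 zero_le_one) hz⟩

theorem genInv_mono {z' : ℝ} (hzz' : z ≤ z') (hz' : z' ≤ g 1) : genInv g z ≤ genInv g z' :=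
  le_genInv hz' fun _ hs hzs => genInv_le hs (hzz'.trans hzs)

theorem le_apply_genInv (hg : ContinuousWithinAt g (Ici (genInv g z)) (genInv g z))
    (hz : z ≤ g 1) : z ≤ g (genInv g z) := by
  by_contra! hlt
  obtain ⟨u, hu, hsub⟩ := mem_nhdsGE_iff_exists_Ico_subset.1 (hg (Iio_mem_nhds hlt))
  obtain ⟨s, hs, hsu⟩ :=
    (csInf_lt_iff bddBelow_genInv_set ⟨1, right_mem_Icc.2 zero_le_one, hz⟩).1 hu
  exact (hsub ⟨csInf_le bddBelow_genInv_set hs, hsu⟩ : g s < z).not_ge hs.2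

theorem leftLim_genInv_le (hg : Monotone g) (h0 : leftLim g 0 ≤ z) (hz : z ≤ g 1) :
    leftLim g (genInv g z) ≤ z := by
  rcases (genInv_mem hz).1.eq_or_lt with h | h
  · rwa [← h]
  · have hbelow : ∀ᶠ s in 𝓝[<] (genInv g z), g s ≤ z := by
      filter_upwards [Ioo_mem_nhdsLT h] with s hs
      by_contra! hzs
      exact (genInv_le ⟨hs.1.le, hs.2.le.trans (genInv_mem hz).2⟩ hzs.le).not_gt hs.2
    exact le_of_tendsto (hg.tendsto_leftLim _) hbelow

theorem genInv_eq {p : ℝ} (hp : p ∈ Icc (0:ℝ) 1) (hzp : z ≤ g p)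
    (hlt : ∀ s ∈ Ico 0 p, g s < z) : genInv g z = p :=
  le_antisymm (genInv_le hp hzp) <| le_csInf ⟨p, hp, hzp⟩ fun s hs =>
    not_lt.1 fun hsp => (hlt s ⟨hs.1.1, hsp⟩).not_ge hs.2

theorem exists_mem_jump (hg : Monotone g) (hgr : ∀ τ, ContinuousWithinAt g (Ici τ) τ)
    (h0 : leftLim g 0 ≤ z) (hz : z ≤ g 1) :
    ∃ p ∈ Icc (0:ℝ) 1, z ∈ Icc (leftLim g p) (g p) :=
  ⟨genInv g z, genInv_mem hz, leftLim_genInv_le hg h0 hz, le_apply_genInv (hgr _) hz⟩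

end genInv

section graph

variable {f : ℝ → ℝ}

theorem mem_graphM1_iff (hf : Monotone f) {q : ℝ × ℝ} :
    q ∈ graphM1 f ↔ q.1 ∈ Icc (0:ℝ) 1 ∧ q.2 ∈ Icc (leftLim f q.1) (f q.1) := by
  rw [graphM1, mem_ofPred_eq, min_eq_left (hf.leftLim_le le_rfl),
    max_eq_right (hf.leftLim_le le_rfl)]

theorem fst_image_graphM1 : Prod.fst '' graphM1 f = Icc 0 1 :=
  Subset.antisymm (fun _ ⟨_, hq, hp⟩ => hp ▸ hq.1) fun p hp =>
    ⟨(p, f p), ⟨hp, min_le_right _ _, le_max_right _ _⟩, rfl⟩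

theorem snd_image_graphM1 (hf : Monotone f) (hfr : ∀ τ, ContinuousWithinAt f (Ici τ) τ) :
    Prod.snd '' graphM1 f = Icc (leftLim f 0) (f 1) := by
  refine Subset.antisymm ?_ fun z hz => ?_
  · rintro _ ⟨q, hq, rfl⟩
    obtain ⟨hq1, hq2⟩ := (mem_graphM1_iff hf).1 hq
    exact ⟨(hf.leftLim hq1.1).trans hq2.1, hq2.2.trans (hf hq1.2)⟩
  · obtain ⟨p, hp, hzp⟩ := exists_mem_jump hf hfr hz.1 hz.2
    exact ⟨(p, z), (mem_graphM1_iff hf).2 ⟨hp, hzp⟩, rfl⟩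

end graph

theorem MonotoneOn.continuousOn_of_image_Icc_eq {α β : Type*} [LinearOrder α]
    [TopologicalSpace α] [OrderTopology α] [LinearOrder β] [TopologicalSpace β]
    [OrderTopology β] [DenselyOrdered β] {u : α → β} {a b : α} {c d : β}
    (hu : MonotoneOn u (Icc a b)) (himg : u '' Icc a b = Icc c d) : ContinuousOn u (Icc a b) := by
  rw [continuousOn_iff_continuous_domRestrict]
  let v : Icc a b → Icc c d := fun s => ⟨u s, himg ▸ mem_image_of_mem u s.2⟩
  have hv : Function.Surjective v := by
    rintro ⟨z, hz⟩
    obtain ⟨s, hs, rfl⟩ := himg ▸ hz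
    exact ⟨⟨s, hs⟩, rfl⟩
  exact continuous_subtype_val.comp
    (Monotone.continuous_of_surjective (f := v) (fun s s' h => hu s.2 s'.2 h) hv)

theorem monotoneOn_of_mem_graphM1 {f r u : ℝ → ℝ} {S : Set ℝ} (hf : Monotone f)
    (hr : MonotoneOn r S) (hgraph : ∀ w ∈ S, (r w, u w) ∈ graphM1 f)
    (hfiber : ∀ w ∈ S, ∀ w' ∈ S, w ≤ w' → r w = r w' → u w ≤ u w') : MonotoneOn u S := by
  intro w hw w' hw' hww'
  rcases (hr hw hw' hww').lt_or_eq with hlt | heq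
  · calc u w ≤ f (r w) := ((mem_graphM1_iff hf).1 (hgraph w hw)).2.2
      _ ≤ leftLim f (r w') := hf.le_leftLim hlt
      _ ≤ u w' := ((mem_graphM1_iff hf).1 (hgraph w' hw')).2.1
  · exact hfiber w hw w' hw' hww' heq

theorem isParamRep_of_monotoneOn {f r u : ℝ → ℝ} {L : ℝ} (hf : Monotone f)
    (hfr : ∀ τ, ContinuousWithinAt f (Ici τ) τ) (hL : 0 < L)
    (hr : MonotoneOn r (Icc 0 L)) (hu : MonotoneOn u (Icc 0 L))
    (himg : (fun w => (r w, u w)) '' Icc 0 L = graphM1 f) :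
    IsParamRep f (fun s => r (L * s)) (fun s => u (L * s)) := by
  have hscale : (L * ·) '' Icc (0:ℝ) 1 = Icc 0 L := by
    rw [image_mul_left_Icc hL.le zero_le_one, mul_zero, mul_one]
  have hmaps : MapsTo (L * ·) (Icc (0:ℝ) 1) (Icc 0 L) := hscale ▸ mapsTo_image _ _
  have hgraph : ∀ w ∈ Icc 0 L, (r w, u w) ∈ graphM1 f := fun w hw =>
    himg ▸ mem_image_of_mem (fun w => (r w, u w)) hw
  have hrc : ContinuousOn r (Icc 0 L) := hr.continuousOn_of_image_Icc_eq <| by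
    rw [← fst_image_graphM1 (f := f), ← himg, image_image]
  have huc : ContinuousOn u (Icc 0 L) := hu.continuousOn_of_image_Icc_eq <| by
    rw [← snd_image_graphM1 hf hfr, ← himg, image_image]
  refine ⟨hrc.comp (by fun_prop) hmaps, huc.comp (by fun_prop) hmaps, ?_, ?_⟩
  · rw [← himg, ← hscale, image_image]
  · intro s hs s' hs' hss'
    have hw := hmaps hs
    have hw' := hmaps hs'
    have hww' : L * s ≤ L * s' := mul_le_mul_of_nonneg_left hss' hL.le
    rcases (hr hw hw' hww').lt_or_eq with hlt | heq
    · exact Or.inl hlt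
    · refine Or.inr ⟨heq, ?_⟩
      have hjump := ((mem_graphM1_iff hf).1 (hgraph _ hw)).2
      have hjump' := ((mem_graphM1_iff hf).1 (hgraph _ hw')).2
      dsimp only at hjump hjump' heq ⊢
      rw [← heq] at hjump' ⊢
      rw [abs_sub_comm, abs_of_nonneg (sub_nonneg.2 hjump.1), abs_sub_comm,
        abs_of_nonneg (sub_nonneg.2 hjump'.1)]
      exact sub_le_sub_right (hu hw hw' hww') _

theorem M1Dist_le_of_isParamRep {f g r u₁ u₂ : ℝ → ℝ} {η : ℝ} (h₁ : IsParamRep f r u₁)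
    (h₂ : IsParamRep g r u₂) (hη : ∀ s ∈ Icc (0:ℝ) 1, |u₁ s - u₂ s| ≤ η) : M1Dist f g ≤ η := by
  have hη0 : 0 ≤ η := (abs_nonneg _).trans (hη 0 (left_mem_Icc.2 zero_le_one))
  rw [M1Dist]
  refine le_trans (csInf_le ⟨0, ?_⟩ ⟨r, u₁, r, u₂, h₁, h₂, rfl⟩) (max_le ?_ ?_)
  · rintro _ ⟨-, -, -, -, -, -, rfl⟩
    exact (Real.iSup_nonneg fun _ => abs_nonneg _).trans (le_max_left _ _)
  · simpa using hη0
  · exact Real.iSup_le (fun s => hη s s.2) hη0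

/-- The affine map taking `[l, h]` onto `[l', h']`; the constant `l'` when `h = l`. -/
noncomputable def rescaleIcc (l h l' h' v : ℝ) : ℝ := l' + (h' - l') / (h - l) * (v - l)

section rescaleIcc

variable {l h l' h' v : ℝ}

theorem rescaleIcc_slope_mem (hl' : l' ≤ h') (hlen : h' - l' ≤ h - l) :
    (h' - l') / (h - l) ∈ Icc (0:ℝ) 1 :=
  ⟨div_nonneg (by linarith) (by linarith), div_le_one_of_le₀ hlen (by linarith)⟩

theorem right_sub_rescaleIcc (hl' : l' ≤ h') (hlen : h' - l' ≤ h - l) :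
    h' - rescaleIcc l h l' h' v = (h' - l') / (h - l) * (h - v) := by
  unfold rescaleIcc
  rcases eq_or_ne (h - l) 0 with h0 | h0
  · have : h' - l' = 0 := le_antisymm (hlen.trans h0.le) (sub_nonneg.2 hl')
    rw [this, zero_div, zero_mul, zero_mul]
    linarith
  · field_simp
    ring

theorem rescaleIcc_mono (hl' : l' ≤ h') (hlen : h' - l' ≤ h - l) :
    Monotone (rescaleIcc l h l' h') := fun _ _ hvv' => by
  have := (rescaleIcc_slope_mem hl' hlen).1
  unfold rescaleIcc
  gcongr

theorem rescaleIcc_mem (hl' : l' ≤ h') (hlen : h' - l' ≤ h - l) (hv : v ∈ Icc l h) :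
    rescaleIcc l h l' h' v ∈ Icc l' h' := by
  have hρ := rescaleIcc_slope_mem hl' hlen
  have hright := right_sub_rescaleIcc (v := v) hl' hlen
  have h1 : 0 ≤ (h' - l') / (h - l) * (v - l) := mul_nonneg hρ.1 (by linarith [hv.1])
  have h2 : 0 ≤ (h' - l') / (h - l) * (h - v) := mul_nonneg hρ.1 (by linarith [hv.2])
  exact ⟨by unfold rescaleIcc; linarith, by linarith⟩

theorem sub_rescaleIcc_mem (hl' : l' ≤ h') (hlen : h' - l' ≤ h - l) (hv : v ∈ Icc l h) :
    v - rescaleIcc l h l' h' v ∈ Icc (l - l') (h - h') := by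
  have hρ := rescaleIcc_slope_mem hl' hlen
  have hright := right_sub_rescaleIcc (v := v) hl' hlen
  have h1 := mul_le_of_le_one_left (sub_nonneg.2 hv.1) hρ.2
  have h2 := mul_le_of_le_one_left (sub_nonneg.2 hv.2) hρ.2
  exact ⟨by unfold rescaleIcc; linarith, by linarith⟩

theorem rescaleIcc_surjOn (hlh : l ≤ h) (hl' : l' ≤ h') (hlen : h' - l' ≤ h - l) :
    SurjOn (rescaleIcc l h l' h') (Icc l h) (Icc l' h') := by
  have hleft : rescaleIcc l h l' h' l = l' := by simp [rescaleIcc]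
  have hright : rescaleIcc l h l' h' h = h' := by
    have := right_sub_rescaleIcc (v := h) hl' hlen
    rw [sub_self, mul_zero, sub_eq_zero] at this
    exact this.symm
  have := intermediate_value_Icc hlh (f := rescaleIcc l h l' h') (by unfold rescaleIcc; fun_prop)
  rwa [hleft, hright] at this

end rescaleIcc

noncomputable def paramTime (x : ℝ → ℝ) : ℝ → ℝ := genInv fun s => s + x s

noncomputable def coupledSpace (x f : ℝ → ℝ) (w : ℝ) : ℝ :=
  rescaleIcc (leftLim x (paramTime x w)) (x (paramTime x w))
    (leftLim f (paramTime x w)) (f (paramTime x w)) (w - paramTime x w)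

section param

variable {x f : ℝ → ℝ} {w : ℝ}

theorem paramTime_mem (hw : w ≤ 1 + x 1) : paramTime x w ∈ Icc (0:ℝ) 1 :=
  genInv_mem hw

theorem monotoneOn_paramTime : MonotoneOn (paramTime x) (Icc 0 (1 + x 1)) :=
  fun _ _ _ hw' hww' => genInv_mono hww' hw'.2

theorem sub_paramTime_mem_jump (hx : Monotone x) (hxr : ∀ τ, ContinuousWithinAt x (Ici τ) τ)
    (hx0 : leftLim x 0 = 0) (hw : w ∈ Icc 0 (1 + x 1)) :
    w - paramTime x w ∈ Icc (leftLim x (paramTime x w)) (x (paramTime x w)) := by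
  have hleftLim : ∀ p, leftLim (fun s => s + x s) p = p + leftLim x p := fun p =>
    leftLim_eq_of_tendsto ((tendsto_id.mono_left nhdsWithin_le_nhds).add (hx.tendsto_leftLim p))
  have hlow := leftLim_genInv_le (g := fun s => s + x s) (fun s s' h => add_le_add h (hx h))
    (by rw [hleftLim, hx0, add_zero]; exact hw.1) hw.2
  have hup := le_apply_genInv (g := fun s => s + x s)
    (continuousWithinAt_id.add (hxr _)) hw.2
  rw [hleftLim] at hlow
  exact ⟨by unfold paramTime; linarith, by unfold paramTime; linarith⟩

theorem paramTime_add (hx : Monotone x) {p v : ℝ} (hp : p ∈ Icc (0:ℝ) 1)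
    (hv : v ∈ Icc (leftLim x p) (x p)) : paramTime x (p + v) = p :=
  genInv_eq hp (by linarith [hv.2]) fun s hs => by
    linarith [hs.2, hx.le_leftLim hs.2, hv.1]

theorem add_mem_Icc_of_mem_jump (hx : Monotone x) (hx0 : leftLim x 0 = 0) {p v : ℝ}
    (hp : p ∈ Icc (0:ℝ) 1) (hv : v ∈ Icc (leftLim x p) (x p)) : p + v ∈ Icc 0 (1 + x 1) :=
  ⟨by linarith [hp.1, hv.1, hx0 ▸ hx.leftLim hp.1], by linarith [hp.2, hv.2, hx hp.2]⟩

theorem image_paramTime_eq_graphM1 (hx : Monotone x)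
    (hxr : ∀ τ, ContinuousWithinAt x (Ici τ) τ) (hx0 : leftLim x 0 = 0) :
    (fun w => (paramTime x w, w - paramTime x w)) '' Icc 0 (1 + x 1) = graphM1 x := by
  refine Subset.antisymm ?_ ?_
  · rintro _ ⟨w, hw, rfl⟩
    exact (mem_graphM1_iff hx).2 ⟨paramTime_mem hw.2, sub_paramTime_mem_jump hx hxr hx0 hw⟩
  · rintro ⟨p, v⟩ hq
    obtain ⟨hp, hv⟩ := (mem_graphM1_iff hx).1 hq
    refine ⟨p + v, add_mem_Icc_of_mem_jump hx hx0 hp hv, ?_⟩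
    simp only [paramTime_add hx hp hv, add_sub_cancel_left]

theorem monotoneOn_sub_paramTime (hx : Monotone x)
    (hxr : ∀ τ, ContinuousWithinAt x (Ici τ) τ) (hx0 : leftLim x 0 = 0) :
    MonotoneOn (fun w => w - paramTime x w) (Icc 0 (1 + x 1)) :=
  monotoneOn_of_mem_graphM1 hx monotoneOn_paramTime
    (fun w hw => image_paramTime_eq_graphM1 hx hxr hx0 ▸ mem_image_of_mem _ hw)
    fun _ _ _ _ hww' heq => by linarith

theorem sub_coupledSpace_mem (hf : Monotone f) (hjump : ∀ p, f p - leftLim f p ≤ x p - leftLim x p)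
    (hx : Monotone x) (hxr : ∀ τ, ContinuousWithinAt x (Ici τ) τ) (hx0 : leftLim x 0 = 0)
    (hw : w ∈ Icc 0 (1 + x 1)) :
    w - paramTime x w - coupledSpace x f w ∈
      Icc (leftLim x (paramTime x w) - leftLim f (paramTime x w))
        (x (paramTime x w) - f (paramTime x w)) :=
  sub_rescaleIcc_mem (hf.leftLim_le le_rfl) (hjump _) (sub_paramTime_mem_jump hx hxr hx0 hw)

theorem image_coupledSpace_eq_graphM1 (hf : Monotone f)
    (hjump : ∀ p, f p - leftLim f p ≤ x p - leftLim x p) (hx : Monotone x)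
    (hxr : ∀ τ, ContinuousWithinAt x (Ici τ) τ) (hx0 : leftLim x 0 = 0) :
    (fun w => (paramTime x w, coupledSpace x f w)) '' Icc 0 (1 + x 1) = graphM1 f := by
  refine Subset.antisymm ?_ ?_
  · rintro _ ⟨w, hw, rfl⟩
    exact (mem_graphM1_iff hf).2 ⟨paramTime_mem hw.2, rescaleIcc_mem (hf.leftLim_le le_rfl)
      (hjump _) (sub_paramTime_mem_jump hx hxr hx0 hw)⟩
  · rintro ⟨p, y⟩ hq
    obtain ⟨hp, hy⟩ := (mem_graphM1_iff hf).1 hq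
    obtain ⟨v, hv, rfl⟩ := rescaleIcc_surjOn (hx.leftLim_le le_rfl) (hf.leftLim_le le_rfl)
      (hjump p) hy
    refine ⟨p + v, add_mem_Icc_of_mem_jump hx hx0 hp hv, ?_⟩
    simp only [coupledSpace, paramTime_add hx hp hv, add_sub_cancel_left]

theorem monotoneOn_coupledSpace (hf : Monotone f)
    (hjump : ∀ p, f p - leftLim f p ≤ x p - leftLim x p) (hx : Monotone x)
    (hxr : ∀ τ, ContinuousWithinAt x (Ici τ) τ) (hx0 : leftLim x 0 = 0) :
    MonotoneOn (coupledSpace x f) (Icc 0 (1 + x 1)) :=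
  monotoneOn_of_mem_graphM1 hf monotoneOn_paramTime
    (fun w hw => image_coupledSpace_eq_graphM1 hf hjump hx hxr hx0 ▸ mem_image_of_mem _ hw)
    fun w _ w' _ hww' heq => by
      unfold coupledSpace
      rw [← heq]
      exact rescaleIcc_mono (hf.leftLim_le le_rfl) (hjump _) (sub_le_sub_right hww' _)

end param

theorem Monotone.leftLim_add {f g : ℝ → ℝ} (hf : Monotone f) (hg : Monotone g) (p : ℝ) :
    leftLim (f + g) p = leftLim f p + leftLim g p :=
  leftLim_eq_of_tendsto ((hf.tendsto_leftLim p).add (hg.tendsto_leftLim p))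

theorem M1Dist_add_le {f d : ℝ → ℝ} (hf : Monotone f) (hd : Monotone d)
    (hfr : ∀ τ, ContinuousWithinAt f (Ici τ) τ) (hdr : ∀ τ, ContinuousWithinAt d (Ici τ) τ)
    (hf0 : leftLim f 0 = 0) (hd0 : leftLim d 0 = 0) : M1Dist (f + d) f ≤ d 1 := by
  have hx : Monotone (f + d) := hf.add hd
  have hxr : ∀ τ, ContinuousWithinAt (f + d) (Ici τ) τ := fun τ => (hfr τ).add (hdr τ)
  have hx0 : leftLim (f + d) 0 = 0 := by rw [hf.leftLim_add hd, hf0, hd0, add_zero]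
  have hjump : ∀ p, f p - leftLim f p ≤ (f + d) p - leftLim (f + d) p := fun p => by
    rw [hf.leftLim_add hd, Pi.add_apply]
    linarith [hd.leftLim_le (le_refl p)]
  have hL : 0 < 1 + (f + d) 1 := by linarith [hx0 ▸ hx.leftLim_le zero_le_one]
  refine M1Dist_le_of_isParamRep
    (isParamRep_of_monotoneOn hx hxr hL monotoneOn_paramTime
      (monotoneOn_sub_paramTime hx hxr hx0) (image_paramTime_eq_graphM1 hx hxr hx0))
    (isParamRep_of_monotoneOn hf hfr hL monotoneOn_paramTime
      (monotoneOn_coupledSpace hf hjump hx hxr hx0)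
      (image_coupledSpace_eq_graphM1 hf hjump hx hxr hx0)) fun s hs => ?_
  have hw : (1 + (f + d) 1) * s ∈ Icc 0 (1 + (f + d) 1) :=
    ⟨mul_nonneg hL.le hs.1, mul_le_of_le_one_right hL.le hs.2⟩
  obtain ⟨hp0, hp1⟩ := paramTime_mem hw.2
  obtain ⟨hlow, hup⟩ := sub_coupledSpace_mem hf hjump hx hxr hx0 hw
  rw [hf.leftLim_add hd] at hlow
  have hdp := hd0 ▸ hd.leftLim hp0
  set p := paramTime (f + d) ((1 + (f + d) 1) * s)
  have hxp : (f + d) p = f p + d p := rfl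
  rw [abs_le]
  constructor <;> linarith [hd hp1]

section stepSum

variable {n : ℕ} (t a : Fin n → ℝ)

noncomputable def stepSum (S : Finset (Fin n)) (s : ℝ) : ℝ := ∑ i ∈ S, if t i ≤ s then a i else 0

variable {t a}

theorem monotone_stepSum (ha : ∀ i, 0 ≤ a i) (S : Finset (Fin n)) : Monotone (stepSum t a S) :=
  Monotone.finsetSum fun i _ s s' hss' => by
    split_ifs <;> linarith [ha i]

theorem continuousWithinAt_stepSum (S : Finset (Fin n)) (τ : ℝ) :
    ContinuousWithinAt (stepSum t a S) (Ici τ) τ := by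
  refine tendsto_finsetSum S fun i _ => ?_
  by_cases hi : t i ≤ τ
  · refine tendsto_const_nhds.congr' ?_
    filter_upwards [self_mem_nhdsWithin] with s hs
    rw [if_pos hi, if_pos (hi.trans hs)]
  · refine tendsto_const_nhds.congr' ?_
    filter_upwards [Ico_mem_nhdsGE (not_le.1 hi)] with s hs
    rw [if_neg hi, if_neg (not_le.2 hs.2)]

theorem leftLim_stepSum_zero (ht : ∀ i, 0 ≤ t i) (S : Finset (Fin n)) :
    leftLim (stepSum t a S) 0 = 0 :=
  leftLim_eq_of_tendsto <| tendsto_const_nhds.congr' <| eventually_nhdsWithin_of_forall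
    fun s hs => (Finset.sum_eq_zero fun i _ => if_neg (by linarith [ht i, mem_Iio.1 hs])).symm

theorem stepSum_le_sum (ha : ∀ i, 0 ≤ a i) (S : Finset (Fin n)) (s : ℝ) :
    stepSum t a S s ≤ ∑ i ∈ S, a i :=
  Finset.sum_le_sum fun i _ => by split_ifs <;> linarith [ha i]

end stepSum

theorem m1Dist_keep_largest_jumps_general
    (n : ℕ) (t : Fin n → ℝ) (ht : ∀ i, t i ∈ Set.Icc (0:ℝ) 1)
    (a : Fin n → ℝ) (ha : ∀ i, 0 < a i)
    (c : ℝ → ℝ) (hc_cont : Continuous c) (hc_mono : Monotone c) (hc0 : c 0 = 0)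
    (x xk : ℝ → ℝ)
    (hx : x = fun s => c s + ∑ i : Fin n, if t i ≤ s then a i else 0)
    (J : Finset (Fin n))
    (hxk : xk = fun s => ∑ i ∈ J, if t i ≤ s then a i else 0)
    (η : ℝ)
    (hη : (∑ i ∈ Jᶜ, a i) + (c 1 - c 0) ≤ η) :
    M1Dist x xk ≤ η := by
  have ha0 : ∀ i, 0 ≤ a i := fun i => (ha i).le
  have ht0 : ∀ i, 0 ≤ t i := fun i => (ht i).1
  set d := c + stepSum t a Jᶜ
  have hsplit : x = xk + d := by
    rw [hx, hxk]
    funext s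
    simp only [d, Pi.add_apply, stepSum, ← Finset.sum_add_sum_compl J]
    ring
  have hd0 : leftLim d 0 = 0 := by
    rw [hc_mono.leftLim_add (monotone_stepSum ha0 _), hc_cont.continuousWithinAt.leftLim_eq, hc0,
      leftLim_stepSum_zero ht0, add_zero]
  have hd1 : d 1 ≤ η := by
    linarith [stepSum_le_sum (t := t) ha0 Jᶜ 1, show d 1 = c 1 + stepSum t a Jᶜ 1 from rfl]
  rw [hsplit, show xk = stepSum t a J from hxk]
  exact (M1Dist_add_le (monotone_stepSum ha0 J) (hc_mono.add (monotone_stepSum ha0 _))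
    (continuousWithinAt_stepSum J)
    (fun τ => hc_cont.continuousWithinAt.add (continuousWithinAt_stepSum _ τ))
    (leftLim_stepSum_zero ht0 J) hd0).trans hd1

/-- For a nondecreasing càdlàg path `x = c + Σᵢ aᵢ 1{tᵢ ≤ ·}` with finitely many, all
positive, jumps (`c` continuous nondecreasing, `c 0 = 0`), and `x_k` the pure-jump path
keeping only the `k+1` largest jumps (a set `J` of indices of cardinality `min (k+1) n`
containing the largest jump sizes), if the total mass of the discarded jumps plus the
continuous variation `c 1 − c 0` is at most `η`, then `d_{M1}(x, x_k) ≤ η`. -/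
theorem m1Dist_keep_largest_jumps
    (n k : ℕ) (t : Fin n → ℝ) (ht : ∀ i, t i ∈ Set.Icc (0:ℝ) 1)
    (a : Fin n → ℝ) (ha : ∀ i, 0 < a i)
    (c : ℝ → ℝ) (hc_cont : Continuous c) (hc_mono : Monotone c) (hc0 : c 0 = 0)
    (x xk : ℝ → ℝ)
    (hx : x = fun s => c s + ∑ i : Fin n, if t i ≤ s then a i else 0)
    (J : Finset (Fin n)) (hJcard : J.card = min (k + 1) n)
    (hJtop : ∀ i ∈ J, ∀ j ∉ J, a j ≤ a i)
    (hxk : xk = fun s => ∑ i ∈ J, if t i ≤ s then a i else 0)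
    (η : ℝ)
    (hη : (∑ i ∈ Jᶜ, a i) + (c 1 - c 0) ≤ η) :
    M1Dist x xk ≤ η :=
  m1Dist_keep_largest_jumps_general n t ht a ha c hc_cont hc_mono hc0 x xk hx J hxk η hη
end
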